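/- Let (G,T) be a bipartite graft with color classes A and B, let F be a minimum join, and let X ⊆ A be a maximal bipartitic extreme set. Then every vertex of C_X belongs to B, is not in T, and is incident with no edge that belongs to any minimum join of (G,T) (i.e., every vertex of C_X is a trivial vertex from B). -/

import Mathlib

open scoped Classical

variable {V : Type*}

/-- The `F`-weight of a walk: number of edges outside `F` minus number of edges in `F`. -/
noncomputable def walkWeight {G : SimpleGraph V} (F : Set (Sym2 V)) {x y : V}
    (p : G.Walk x y) : ℤ :=
  ((p.edges.filter fun e => e ∉ F).length : ℤ) -
    ((p.edges.filter fun e => e ∈ F).length : ℤ)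

/-- The `F`-distance between `x` and `y`: the minimum `F`-weight of a path between them. -/
noncomputable def distF (G : SimpleGraph V) (F : Set (Sym2 V)) (x y : V) : ℤ :=
  sInf {w : ℤ | ∃ p : G.Walk x y, p.IsPath ∧ walkWeight F p = w}

/-- `F` is a join of the graft `(G, T)`. -/
def IsJoin (G : SimpleGraph V) (T : Set V) (F : Set (Sym2 V)) : Prop :=
  F ⊆ G.edgeSet ∧ ∀ v : V, v ∈ T ↔ Odd {e ∈ F | v ∈ e}.ncard

/-- `F` is a minimum join of the graft `(G, T)`. -/
def IsMinJoin (G : SimpleGraph V) (T : Set V) (F : Set (Sym2 V)) : Prop :=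
  IsJoin G T F ∧ ∀ F' : Set (Sym2 V), IsJoin G T F' → F.ncard ≤ F'.ncard

/-- `(G, T)` is a graft: every connected component contains an even number of vertices of `T`. -/
def IsGraft (G : SimpleGraph V) (T : Set V) : Prop :=
  ∀ v : V, Even {u | u ∈ T ∧ G.Reachable v u}.ncard

/-- `X` is an extreme set: `d_F(x, y) ≥ 0` for all `x, y ∈ X`. -/
def IsExtremeSet (G : SimpleGraph V) (F : Set (Sym2 V)) (X : Set V) : Prop :=
  ∀ x ∈ X, ∀ y ∈ X, 0 ≤ distF G F x y

/-- `G` is bipartite with vertex set `Vset` and color classes `A`, `B`. -/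
def IsBipartitionOn (G : SimpleGraph V) (Vset A B : Set V) : Prop :=
  A ∪ B = Vset ∧ Disjoint A B ∧
    ∀ v w : V, G.Adj v w → (v ∈ A ∧ w ∈ B) ∨ (v ∈ B ∧ w ∈ A)

/-- `X` is a maximal bipartitic extreme set with respect to color classes `A`, `B`. -/
def MaxBipExtreme (G : SimpleGraph V) (F : Set (Sym2 V)) (A B X : Set V) : Prop :=
  IsExtremeSet G F X ∧ (X ⊆ A ∨ X ⊆ B) ∧
    ∀ X' : Set V, IsExtremeSet G F X' → (X' ⊆ A ∨ X' ⊆ B) → X ⊆ X' → X' = X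

/-- `D_X`: the vertices of `Vset ∖ X` at negative `F`-distance from `X`. -/
def Dset (G : SimpleGraph V) (F : Set (Sym2 V)) (Vset X : Set V) : Set V :=
  {y | y ∈ Vset ∧ y ∉ X ∧ ∃ x ∈ X, distF G F x y < 0}

/-- `C_X = Vset ∖ X ∖ D_X`. -/
def Cset (G : SimpleGraph V) (F : Set (Sym2 V)) (Vset X : Set V) : Set V :=
  (Vset \ X) \ Dset G F Vset X

/-- `min_{x ∈ X} d_F(x, y)`. -/
noncomputable def minDistX (G : SimpleGraph V) (F : Set (Sym2 V)) (X : Set V) (y : V) : ℤ :=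
  sInf {d : ℤ | ∃ x ∈ X, distF G F x y = d}

/-- The graph `G − S` obtained by deleting the vertices of `S`. -/
def gDelete (G : SimpleGraph V) (S : Set V) : SimpleGraph V where
  Adj v w := G.Adj v w ∧ v ∉ S ∧ w ∉ S
  symm := ⟨fun v w ⟨h, hv, hw⟩ => ⟨h.symm, hw, hv⟩⟩
  loopless := ⟨fun v h => G.loopless.irrefl v h.1⟩

/-- The subgraph of `G` induced by `S`. -/
def gRestrict (G : SimpleGraph V) (S : Set V) : SimpleGraph V where
  Adj v w := G.Adj v w ∧ v ∈ S ∧ w ∈ S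
  symm := ⟨fun v w ⟨h, hv, hw⟩ => ⟨h.symm, hw, hv⟩⟩
  loopless := ⟨fun v h => G.loopless.irrefl v h.1⟩

/-- `C` is (the vertex set of) a connected component of `G − X`. -/
def IsCompOf (G : SimpleGraph V) (X C : Set V) : Prop :=
  ∃ v, v ∉ X ∧ C = {u | (gDelete G X).Reachable v u}

/-- `δ_G(C)`: the edges of `G` with exactly one end in `C`. -/
def edgeBoundary (G : SimpleGraph V) (C : Set V) : Set (Sym2 V) :=
  {e | e ∈ G.edgeSet ∧ ∃ u v : V, e = s(u, v) ∧ u ∈ C ∧ v ∉ C}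

/-- `X` is an `F`-combic set of the graft `(G, T)`. -/
def IsCombic (G : SimpleGraph V) (T : Set V) (F : Set (Sym2 V)) (X : Set V) : Prop :=
  (∀ u v : V, s(u, v) ∈ F → ¬(u ∈ X ∧ v ∈ X)) ∧
  (∀ C : Set V, IsCompOf G X C → Odd (C ∩ T).ncard →
      (edgeBoundary G C ∩ F).ncard = 1) ∧
  (∀ C : Set V, IsCompOf G X C → Even (C ∩ T).ncard →
      edgeBoundary G C ∩ F = ∅)

/-- The rootlization of `G` by the mount `X`, root `r` and attachment `s`. -/
def rootlize (G : SimpleGraph V) (X : Set V) (r s : V) : SimpleGraph V :=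
  SimpleGraph.fromRel fun v w => G.Adj v w ∨ (v = r ∧ w = s) ∨ (v = s ∧ w ∈ X)

/-- The initial component of `r`: the connected component of `r` in the subgraph
induced by the vertices at nonpositive `F`-distance from `r`. -/
def initComp (G : SimpleGraph V) (F : Set (Sym2 V)) (r : V) : Set V :=
  {x | (gRestrict G {y | distF G F r y ≤ 0}).Reachable r x}

/-!
Let `v ∈ C_X`, so `d_F(x, v) ≥ 0` for every `x ∈ X`. If `v` were in `A`, then `X ∪ {v}` would be
a larger bipartitic extreme set; hence `v ∈ B`. Since a minimum join has no cycle of negative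
`F`-weight, `d_F(x, v) ≤ d_F(x, u) + 1` for every edge `uv`; so for a neighbour `u ∈ A` of `v`
the distance `d_F(x, u)` is at least `-1` and even, hence nonnegative, and maximality puts `u`
into `X`. Now an `F`-edge `vu` would give `d_F(u, v) = -1`. For another minimum join `F'`, the
set `F ∆ F'` has even degree everywhere, so an `F'`-edge `vu ∉ F` lies on a cycle inside
`F ∆ F'`. That cycle has nonnegative `F'`-weight, i.e. nonpositive `F`-weight, so its `u`–`v`
part is a path of `F`-weight `≤ -1`, contradicting `d_F(u, v) ≥ 0`. Finally `v ∉ T`, as no edge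
of `F` meets `v`.
-/

open SimpleGraph
open scoped symmDiff

namespace Set

variable {α : Type*} {s t : Set α}

lemma ncard_symmDiff_add_two_mul_ncard_inter (hs : s.Finite) (ht : t.Finite) :
    (s ∆ t).ncard + 2 * (s ∩ t).ncard = s.ncard + t.ncard := by
  have hsub : s ∩ t ⊆ s ∪ t := inter_subset_left.trans subset_union_left
  have hle := ncard_le_ncard hsub (hs.union ht)
  rw [symmDiff_eq_sup_sdiff_inf]
  change ((s ∪ t) \ (s ∩ t)).ncard + _ = _
  rw [ncard_sdiff hsub (hs.inter_of_left t),
    ← ncard_union_add_ncard_inter s t hs ht]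
  omega

lemma even_ncard_symmDiff_iff (hs : s.Finite) (ht : t.Finite) :
    Even (s ∆ t).ncard ↔ (Even s.ncard ↔ Even t.ncard) := by
  have h := ncard_symmDiff_add_two_mul_ncard_inter hs ht
  rw [Nat.even_iff, Nat.even_iff, Nat.even_iff]
  omega

lemma sep_symmDiff (p : α → Prop) :
    {x ∈ s ∆ t | p x} = {x ∈ s | p x} ∆ {x ∈ t | p x} := by
  ext x
  simp only [mem_ofPred_eq, mem_symmDiff]
  tauto

end Set

lemma List.Nodup.ncard_setOf_mem_and {α : Type*} {l : List α} (hl : l.Nodup) (p : α → Prop) :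
    {a | a ∈ l ∧ p a}.ncard = l.countP (fun a => p a) := by
  have h : {a | a ∈ l ∧ p a} = ((l.filter fun a => p a).toFinset : Set α) := by
    ext a
    simp
  rw [h, Set.ncard_coe_finset, List.toFinset_card_of_nodup (hl.filter _),
    List.countP_eq_length_filter]

section WalkWeight

variable {G : SimpleGraph V} (F : Set (Sym2 V))

@[simp]
lemma walkWeight_nil {v : V} : walkWeight F (Walk.nil : G.Walk v v) = 0 := by
  simp [walkWeight]

lemma walkWeight_cons {u v w : V} (h : G.Adj u v) (p : G.Walk v w) :
    walkWeight F (Walk.cons h p) = (if s(u, v) ∈ F then -1 else 1) + walkWeight F p := by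
  unfold walkWeight
  split_ifs with hm <;> simp [hm] <;> ring

lemma walkWeight_append {u v w : V} (p : G.Walk u v) (q : G.Walk v w) :
    walkWeight F (p.append q) = walkWeight F p + walkWeight F q := by
  unfold walkWeight
  simp only [Walk.edges_append, List.filter_append, List.length_append]
  push_cast
  ring

lemma walkWeight_concat {u v w : V} (p : G.Walk u v) (h : G.Adj v w) :
    walkWeight F (p.concat h) = walkWeight F p + (if s(v, w) ∈ F then -1 else 1) := by
  rw [Walk.concat_eq_append, walkWeight_append, walkWeight_cons, walkWeight_nil, add_zero]

lemma walkWeight_reverse {u v : V} (p : G.Walk u v) : walkWeight F p.reverse = walkWeight F p := by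
  simp [walkWeight, List.filter_reverse]

lemma walkWeight_eq_length_sub {u v : V} (p : G.Walk u v) :
    walkWeight F p = p.length - 2 * (p.edges.countP fun e => e ∈ F) := by
  have h := List.length_eq_countP_add_countP (fun e => decide (e ∈ F)) (l := p.edges)
  simp only [walkWeight, ← List.countP_eq_length_filter, Walk.length_edges, decide_not,
    decide_eq_true_eq] at h ⊢
  omega

lemma neg_length_le_walkWeight {u v : V} (p : G.Walk u v) :
    -(p.length : ℤ) ≤ walkWeight F p := by
  have := p.edges.countP_le_length (p := fun e => e ∈ F)
  rw [Walk.length_edges] at this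
  rw [walkWeight_eq_length_sub]
  omega

lemma even_walkWeight_iff {u v : V} (p : G.Walk u v) : Even (walkWeight F p) ↔ Even p.length := by
  rw [walkWeight_eq_length_sub, Int.even_sub, Int.even_coe_nat]
  simp

lemma walkWeight_eq_neg_of_forall_mem_symmDiff {F' : Set (Sym2 V)} {u v : V} (p : G.Walk u v)
    (h : ∀ e ∈ p.edges, e ∈ F ∆ F') : walkWeight F p = -walkWeight F' p := by
  induction p with
  | nil => simp
  | cons hadj q ih =>
    simp only [Walk.edges_cons, List.mem_cons, forall_eq_or_imp, Set.mem_symmDiff] at h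
    rw [walkWeight_cons, walkWeight_cons, ih h.2]
    rcases h.1 with ⟨h1, h2⟩ | ⟨h1, h2⟩ <;> simp [h1, h2] <;> ring

end WalkWeight

section Distance

variable (G : SimpleGraph V) (F : Set (Sym2 V))

lemma bddBelow_walkWeights [Fintype V] (x y : V) :
    BddBelow {w : ℤ | ∃ p : G.Walk x y, p.IsPath ∧ walkWeight F p = w} := by
  refine ⟨-(Fintype.card V : ℤ), ?_⟩
  rintro w ⟨p, hp, rfl⟩
  have := hp.length_lt
  have := neg_length_le_walkWeight F p
  omega

variable {G F}

lemma distF_le_walkWeight [Fintype V] {x y : V} {p : G.Walk x y} (hp : p.IsPath) :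
    distF G F x y ≤ walkWeight F p :=
  csInf_le (bddBelow_walkWeights G F x y) ⟨p, hp, rfl⟩

lemma exists_isPath_walkWeight_eq_distF [Fintype V] {x y : V} (h : G.Reachable x y) :
    ∃ p : G.Walk x y, p.IsPath ∧ walkWeight F p = distF G F x y := by
  obtain ⟨p⟩ := h
  have hne : {w : ℤ | ∃ q : G.Walk x y, q.IsPath ∧ walkWeight F q = w}.Nonempty :=
    ⟨_, p.toPath, p.toPath.2, rfl⟩
  exact Int.csInf_mem hne (bddBelow_walkWeights G F x y)

lemma distF_eq_zero_of_not_reachable {x y : V} (h : ¬G.Reachable x y) : distF G F x y = 0 := by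
  have : {w : ℤ | ∃ p : G.Walk x y, p.IsPath ∧ walkWeight F p = w} = ∅ :=
    Set.eq_empty_of_forall_notMem fun _ ⟨p, _⟩ => h ⟨p⟩
  rw [distF, this, Int.csInf_empty]

variable (G F) in
lemma distF_self (x : V) : distF G F x x = 0 := by
  have : {w : ℤ | ∃ p : G.Walk x x, p.IsPath ∧ walkWeight F p = w} = {0} := by
    ext w
    constructor
    · rintro ⟨p, hp, rfl⟩
      obtain rfl := (Walk.isPath_iff_nil.mp hp).eq_nil
      simp
    · rintro rfl
      exact ⟨Walk.nil, Walk.IsPath.nil, walkWeight_nil F⟩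
  rw [distF, this, csInf_singleton]

variable (G F) in
lemma distF_comm (x y : V) : distF G F x y = distF G F y x := by
  unfold distF
  congr 1
  ext w
  exact ⟨fun ⟨p, hp, hw⟩ => ⟨p.reverse, hp.reverse, (walkWeight_reverse F p).trans hw⟩,
    fun ⟨p, hp, hw⟩ => ⟨p.reverse, hp.reverse, (walkWeight_reverse F p).trans hw⟩⟩

end Distance

section Bipartite

variable {G : SimpleGraph V} {A B : Set V}

lemma IsBipartitionOn.mem_or_mem (hbip : IsBipartitionOn G Set.univ A B) (x : V) :
    x ∈ A ∨ x ∈ B := by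
  rw [← Set.mem_union, hbip.1]
  trivial

lemma IsBipartitionOn.mem_iff_notMem_of_adj (hbip : IsBipartitionOn G Set.univ A B) {x y : V}
    (h : G.Adj x y) : x ∈ A ↔ y ∉ A := by
  have hAB := Set.disjoint_left.mp hbip.2.1
  rcases hbip.2.2 x y h with ⟨hx, hy⟩ | ⟨hx, hy⟩
  · exact iff_of_true hx fun hyA => hAB hyA hy
  · exact iff_of_false (fun hxA => hAB hxA hx) (not_not.mpr hy)

lemma IsBipartitionOn.even_length_iff (hbip : IsBipartitionOn G Set.univ A B) {x y : V}
    (p : G.Walk x y) : Even p.length ↔ (x ∈ A ↔ y ∈ A) := by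
  induction p with
  | nil => simp
  | cons h q ih =>
    rw [Walk.length_cons, Nat.even_add_one, ih, hbip.mem_iff_notMem_of_adj h]
    tauto

lemma IsBipartitionOn.even_distF [Fintype V] (hbip : IsBipartitionOn G Set.univ A B)
    (F : Set (Sym2 V)) {x y : V} (hx : x ∈ A) (hy : y ∈ A) : Even (distF G F x y) := by
  by_cases h : G.Reachable x y
  · obtain ⟨p, -, hp⟩ := exists_isPath_walkWeight_eq_distF (F := F) h
    rw [← hp, even_walkWeight_iff, hbip.even_length_iff]
    exact iff_of_true hx hy
  · rw [distF_eq_zero_of_not_reachable h]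
    exact ⟨0, rfl⟩

end Bipartite

section Join

variable {G : SimpleGraph V} {T : Set V} {F F' D : Set (Sym2 V)}

lemma IsJoin.symmDiff_of_even [Fintype V] (hF : IsJoin G T F) (hD : D ⊆ G.edgeSet)
    (heven : ∀ x, Even {e ∈ D | x ∈ e}.ncard) : IsJoin G T (F ∆ D) := by
  refine ⟨fun e he => he.elim (fun h => hF.1 h.1) (fun h => hD h.1), fun x => ?_⟩
  rw [hF.2 x, Set.sep_symmDiff, ← Nat.not_even_iff_odd, ← Nat.not_even_iff_odd,
    Set.even_ncard_symmDiff_iff (Set.toFinite _) (Set.toFinite _)]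
  have := heven x
  tauto

lemma IsJoin.even_ncard_sep_symmDiff [Fintype V] (hF : IsJoin G T F) (hF' : IsJoin G T F')
    (x : V) : Even {e ∈ F ∆ F' | x ∈ e}.ncard := by
  rw [Set.sep_symmDiff, Set.even_ncard_symmDiff_iff (Set.toFinite _) (Set.toFinite _),
    ← Nat.not_odd_iff_even, ← Nat.not_odd_iff_even, ← hF.2 x, ← hF'.2 x]

lemma IsJoin.notMem_of_forall_notMem (hF : IsJoin G T F) {v : V} (h : ∀ e ∈ F, v ∉ e) :
    v ∉ T := by
  rw [hF.2 v, (Set.sep_eq_empty_iff_mem_false).2 h, Set.ncard_empty]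
  exact Nat.not_odd_zero

lemma SimpleGraph.Walk.IsCycle.even_ncard_sep_edgeSet {u : V} {c : G.Walk u u} (hc : c.IsCycle)
    (x : V) : Even {e ∈ c.edgeSet | x ∈ e}.ncard := by
  rw [show {e ∈ c.edgeSet | x ∈ e} = {e | e ∈ c.edges ∧ x ∈ e} from rfl,
    hc.edges_nodup.ncard_setOf_mem_and]
  convert (hc.isTrail.even_countP_edges_iff x).2 fun h => (h rfl).elim

lemma IsMinJoin.walkWeight_nonneg_of_isCycle [Fintype V] (hF : IsMinJoin G T F) {u : V}
    {c : G.Walk u u} (hc : c.IsCycle) : 0 ≤ walkWeight F c := by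
  have hle := hF.2 (F ∆ c.edgeSet) <|
    hF.1.symmDiff_of_even (fun _ he => c.edges_subset_edgeSet he) hc.even_ncard_sep_edgeSet
  have hcard := Set.ncard_symmDiff_add_two_mul_ncard_inter F.toFinite c.edgeSet.toFinite
  have hE : c.edgeSet.ncard = c.length := by
    have := hc.edges_nodup.ncard_setOf_mem_and fun _ => True
    simp only [and_true, decide_true, List.countP_true, Walk.length_edges] at this
    exact this
  have hI : (F ∩ c.edgeSet).ncard = c.edges.countP fun e => e ∈ F := by
    rw [← hc.edges_nodup.ncard_setOf_mem_and, Set.inter_comm]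
    rfl
  rw [walkWeight_eq_length_sub]
  omega

lemma IsMinJoin.neg_one_le_walkWeight_of_adj [Fintype V] (hF : IsMinJoin G T F) {u v : V}
    (h : G.Adj u v) {p : G.Walk v u} (hp : p.IsPath) : -1 ≤ walkWeight F p := by
  by_cases he : s(u, v) ∈ p.edges
  · have hlen := hp.length_eq_one_of_mem_edges (Sym2.eq_swap ▸ he)
    have := neg_length_le_walkWeight F p
    omega
  · have := hF.walkWeight_nonneg_of_isCycle ((Walk.cons_isCycle_iff p h).2 ⟨hp, he⟩)
    rw [walkWeight_cons] at this
    split_ifs at this <;> omega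

lemma IsMinJoin.distF_le_distF_add_one [Fintype V] (hF : IsMinJoin G T F) {u v : V}
    (h : G.Adj u v) (x : V) : distF G F x v ≤ distF G F x u + 1 := by
  by_cases hxu : G.Reachable x u
  · obtain ⟨P, hP, hPw⟩ := exists_isPath_walkWeight_eq_distF (F := F) hxu
    by_cases hv : v ∈ P.support
    · have hsplit := congrArg (walkWeight F) (P.take_spec hv)
      rw [walkWeight_append] at hsplit
      have := hF.neg_one_le_walkWeight_of_adj h (hP.dropUntil hv)
      have := distF_le_walkWeight (F := F) (hP.takeUntil hv)
      omega
    · have hPv : (P.concat h).IsPath := hP.concat hv h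
      have := distF_le_walkWeight (F := F) hPv
      rw [walkWeight_concat] at this
      split_ifs at this <;> omega
  · rw [distF_eq_zero_of_not_reachable hxu,
      distF_eq_zero_of_not_reachable fun hxv => hxu (hxv.trans h.symm.reachable)]
    omega

end Join

section EvenEdgeSet

lemma SimpleGraph.reachable_of_odd_degree [Fintype V] (H : SimpleGraph V) [DecidableRel H.Adj]
    {u w : V} (hu : Odd (H.degree u)) (heven : ∀ x, x ≠ u → x ≠ w → Even (H.degree x)) :
    H.Reachable u w := by
  set S := {x | H.Reachable u x}
  set H' := gRestrict H S
  have hdeg : ∀ x, H'.degree x = if x ∈ S then H.degree x else 0 := by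
    intro x
    simp only [← card_neighborSet_eq_degree]
    split_ifs with hx
    · refine Fintype.card_congr (Equiv.setCongr ?_)
      ext y
      exact ⟨fun hy => hy.1, fun hy => ⟨hy, hx, hx.trans hy.reachable⟩⟩
    · rw [Fintype.card_eq_zero_iff]
      exact ⟨fun ⟨y, hy⟩ => hx hy.2.1⟩
  -- the handshake lemma in the component of `u` yields a second odd vertex there
  obtain ⟨y, hyu, hy⟩ := H'.exists_ne_odd_degree_of_exists_odd_degree u
    (by rwa [hdeg, if_pos (show u ∈ S from Reachable.refl u)])
  rw [hdeg] at hy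
  split_ifs at hy with hyS
  · by_contra hw
    exact Nat.not_even_iff_odd.2 hy (heven y hyu fun h => hw (h ▸ hyS))
  · exact absurd hy Nat.not_odd_zero

lemma SimpleGraph.degree_fromEdgeSet [Fintype V] {D : Set (Sym2 V)} (hD : ∀ e ∈ D, ¬e.IsDiag)
    [DecidableRel (fromEdgeSet D).Adj] (x : V) :
    (fromEdgeSet D).degree x = {e ∈ D | x ∈ e}.ncard := by
  have hedge : (fromEdgeSet D).edgeSet = D := by
    rw [edgeSet_fromEdgeSet]
    exact sdiff_eq_left.2 (Set.disjoint_left.2 hD)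
  rw [← card_incidenceSet_eq_degree, ← Nat.card_eq_fintype_card, Nat.card_coe_set_eq,
    incidenceSet, hedge]

lemma exists_isCycle_cons_of_even_ncard_sep [Fintype V] {G : SimpleGraph V} {D : Set (Sym2 V)}
    (hD : D ⊆ G.edgeSet) (heven : ∀ x, Even {e ∈ D | x ∈ e}.ncard) {u v : V} (h : G.Adj u v)
    (huv : s(u, v) ∈ D) :
    ∃ p : G.Walk v u, (Walk.cons h p).IsCycle ∧ ∀ e ∈ p.edges, e ∈ D := by
  set D' := D \ {s(u, v)}
  set H := fromEdgeSet D'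
  have hsep : ∀ x, {e ∈ D' | x ∈ e} = {e ∈ D | x ∈ e} \ {s(u, v)} := fun x => by
    ext e
    simp only [D', Set.mem_ofPred_eq, Set.mem_sdiff, Set.mem_singleton_iff]
    tauto
  have hdeg : ∀ x, H.degree x = ({e ∈ D | x ∈ e} \ {s(u, v)}).ncard := fun x => by
    rw [degree_fromEdgeSet (fun e he => G.not_isDiag_of_mem_edgeSet (hD he.1)), hsep]
  have hv : Odd (H.degree v) := by
    have hmem : s(u, v) ∈ {e ∈ D | v ∈ e} := ⟨huv, Sym2.mem_mk_right u v⟩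
    rw [hdeg, Set.ncard_sdiff_singleton_of_mem hmem]
    exact Nat.Even.sub_odd ((Set.ncard_pos (Set.toFinite _)).2 ⟨_, hmem⟩) (heven v) odd_one
  have hrest : ∀ x, x ≠ v → x ≠ u → Even (H.degree x) := fun x hxv hxu => by
    rw [hdeg, Set.sdiff_singleton_eq_self fun hx => ?_]
    · exact heven x
    · rcases Sym2.mem_iff.1 hx.2 with rfl | rfl <;> contradiction
  obtain ⟨q⟩ := H.reachable_of_odd_degree hv hrest
  have hHG : H ≤ G := (fromEdgeSet_le G).2 fun e he => hD he.1.1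
  have hq : ∀ e ∈ (q.toPath : H.Walk v u).edges, e ∈ D' := fun e he => by
    have := (q.toPath : H.Walk v u).edges_subset_edgeSet he
    rw [edgeSet_fromEdgeSet] at this
    exact this.1
  refine ⟨(q.toPath : H.Walk v u).mapLe hHG, ?_, ?_⟩
  · rw [Walk.cons_isCycle_iff, Walk.isPath_mapLe, Walk.edges_mapLe_eq_edges]
    exact ⟨q.toPath.2, fun he => (hq _ he).2 rfl⟩
  · rw [Walk.edges_mapLe_eq_edges]
    exact fun e he => (hq e he).1

end EvenEdgeSet

section MaximalExtreme

variable {G : SimpleGraph V} {T A B X : Set V} {F : Set (Sym2 V)}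

lemma MaxBipExtreme.mem_of_forall_distF_nonneg (hX : MaxBipExtreme G F A B X) (hXA : X ⊆ A)
    {u : V} (huA : u ∈ A) (hu : ∀ x ∈ X, 0 ≤ distF G F x u) : u ∈ X := by
  have hext : IsExtremeSet G F (insert u X) := by
    rintro a (rfl | ha) b (rfl | hb)
    · rw [distF_self]
    · rw [distF_comm]
      exact hu b hb
    · exact hu a ha
    · exact hX.1 a ha b hb
  rw [← hX.2.2 _ hext (Or.inl (Set.insert_subset huA hXA)) (Set.subset_insert u X)]
  exact Set.mem_insert u X

lemma MaxBipExtreme.mem_of_adj [Fintype V] (hX : MaxBipExtreme G F A B X) (hXA : X ⊆ A)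
    (hbip : IsBipartitionOn G Set.univ A B) (hF : IsMinJoin G T F) {u v : V}
    (hv : ∀ x ∈ X, 0 ≤ distF G F x v) (hvB : v ∈ B) (h : G.Adj v u) : u ∈ X := by
  have huA : u ∈ A := by
    rcases hbip.2.2 v u h with ⟨hvA, -⟩ | ⟨-, hu⟩
    · exact (Set.disjoint_left.mp hbip.2.1 hvA hvB).elim
    · exact hu
  refine hX.mem_of_forall_distF_nonneg hXA huA fun x hx => ?_
  have hle := hF.distF_le_distF_add_one h.symm x
  obtain ⟨k, hk⟩ := hbip.even_distF F (hXA hx) huA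
  have := hv x hx
  omega

lemma IsMinJoin.notMem_of_forall_adj_mem [Fintype V] {F' : Set (Sym2 V)}
    (hF' : IsMinJoin G T F') (hF : IsJoin G T F) {v : V} (hv : ∀ x ∈ X, 0 ≤ distF G F x v)
    (hN : ∀ u, G.Adj v u → u ∈ X) : ∀ e ∈ F', v ∉ e := by
  intro e he hve
  obtain ⟨u, rfl⟩ := Sym2.mem_iff_exists.1 hve
  have h : G.Adj v u := hF'.1.1 he
  have hu := hv u (hN u h)
  by_cases heF : s(v, u) ∈ F
  · have := distF_le_walkWeight (F := F) (p := Walk.cons h.symm Walk.nil) (by simp [h.ne'])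
    rw [walkWeight_cons, if_pos (Sym2.eq_swap ▸ heF), walkWeight_nil] at this
    omega
  · -- the `(F ∆ F')`-cycle `vu + p` has `F'`-weight `≥ 0`, i.e. `F`-weight `≤ 0`
    obtain ⟨p, hc, hp⟩ := exists_isCycle_cons_of_even_ncard_sep
      (fun e he => he.elim (fun h => hF.1 h.1) (fun h => hF'.1.1 h.1))
      (hF.even_ncard_sep_symmDiff hF'.1) h (Or.inr ⟨he, heF⟩)
    have hcyc := hF'.walkWeight_nonneg_of_isCycle hc
    rw [walkWeight_cons, if_pos he, ← neg_neg (walkWeight F' p),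
      ← walkWeight_eq_neg_of_forall_mem_symmDiff F p hp] at hcyc
    have := distF_le_walkWeight (F := F) ((Walk.cons_isCycle_iff p h).1 hc).1
    omega

end MaximalExtreme

theorem stmt_4_general [Fintype V] (G : SimpleGraph V) (T A B X : Set V) (F : Set (Sym2 V))
    (hbip : IsBipartitionOn G Set.univ A B)
    (hF : IsMinJoin G T F) (hXA : X ⊆ A) (hX : MaxBipExtreme G F A B X) :
    ∀ v ∈ Cset G F Set.univ X, v ∈ B ∧ v ∉ T ∧
      ∀ F' : Set (Sym2 V), IsMinJoin G T F' → ∀ e ∈ F', v ∉ e := by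
  rintro v ⟨⟨-, hvX⟩, hvD⟩
  have hv : ∀ x ∈ X, 0 ≤ distF G F x v := fun x hx =>
    not_lt.1 fun h => hvD ⟨trivial, hvX, x, hx, h⟩
  have hvB : v ∈ B := (hbip.mem_or_mem v).resolve_left fun hvA =>
    hvX (hX.mem_of_forall_distF_nonneg hXA hvA hv)
  have hN : ∀ u, G.Adj v u → u ∈ X := fun u h => hX.mem_of_adj hXA hbip hF hv hvB h
  have hfree : ∀ F', IsMinJoin G T F' → ∀ e ∈ F', v ∉ e := fun F' hF' =>
    hF'.notMem_of_forall_adj_mem hF.1 hv hN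
  exact ⟨hvB, hF.1.notMem_of_forall_notMem (hfree F hF), hfree⟩

/-- For a maximal bipartitic extreme set `X ⊆ A` of a bipartite graft,
every vertex of `C_X` is a trivial vertex from `B`: it lies in `B`, is not in `T`,
and is incident with no edge of any minimum join. -/
theorem stmt_4 [Fintype V] (G : SimpleGraph V) (T A B X : Set V) (F : Set (Sym2 V))
    (hGT : IsGraft G T) (hbip : IsBipartitionOn G Set.univ A B)
    (hF : IsMinJoin G T F) (hXA : X ⊆ A) (hX : MaxBipExtreme G F A B X) :
    ∀ v ∈ Cset G F Set.univ X, v ∈ B ∧ v ∉ T ∧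
      ∀ F' : Set (Sym2 V), IsMinJoin G T F' → ∀ e ∈ F', v ∉ e :=
  stmt_4_general G T A B X F hbip hF hXA hX
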